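/- For any smooth curve t ↦ (x(t), \bar x(t), \bar y(t)) with d x^{\bar u}/dt = y^{\bar u} and dx^u/dt = C^u, the constrained Euler–Lagrange expression satisfies: d/dt(∂L_c/∂y^{\bar u}) − ∂L_c/∂x^{\bar u} − C^u_{\bar u} ∂L_c/∂x^u = d/dt(∂L/∂y^{\bar u}) − ∂L/∂x^{\bar u} + C^u_{\bar u}(d/dt(∂L/∂y^u) − ∂L/∂x^u) + (∂L/∂y^u)(dC^u_{\bar u}/dt − ∂C^u/∂x^{\bar u} − C^v_{\bar u} ∂C^u/∂x^v), where all derivatives of L are evaluated at y^u = C^u. -/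

import Mathlib

open Finset

/-- Constraint phase space `(x, x̄, ȳ)`. -/
abbrev P3 (m n : ℕ) := (Fin m → ℝ) × (Fin n → ℝ) × (Fin n → ℝ)
/-- Full velocity space `(x, x̄, y, ȳ)`. -/
abbrev P4 (m n : ℕ) := (Fin m → ℝ) × (Fin n → ℝ) × (Fin m → ℝ) × (Fin n → ℝ)

def e3x {m n : ℕ} (u : Fin m) : P3 m n := (Pi.single u 1, 0, 0)
def e3xb {m n : ℕ} (ub : Fin n) : P3 m n := (0, Pi.single ub 1, 0)
def e3yb {m n : ℕ} (ub : Fin n) : P3 m n := (0, 0, Pi.single ub 1)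

def e4x {m n : ℕ} (u : Fin m) : P4 m n := (Pi.single u 1, 0, 0, 0)
def e4xb {m n : ℕ} (ub : Fin n) : P4 m n := (0, Pi.single ub 1, 0, 0)
def e4y {m n : ℕ} (u : Fin m) : P4 m n := (0, 0, Pi.single u 1, 0)
def e4yb {m n : ℕ} (ub : Fin n) : P4 m n := (0, 0, 0, Pi.single ub 1)

/-- `C^u_ū = ∂C^u/∂y^ū`. -/
noncomputable def Cub {m n : ℕ} (C : P3 m n → Fin m → ℝ) (p : P3 m n)
    (u : Fin m) (ub : Fin n) : ℝ :=
  fderiv ℝ (fun z => C z u) p (e3yb ub)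

/- ### Auxiliary lemmas -/

lemma vec_decomp {m n : ℕ} (a : Fin m → ℝ) (b : Fin n → ℝ) (c : Fin m → ℝ) (d : Fin n → ℝ) :
    ((a, b, c, d) : P4 m n)
      = ∑ u, a u • e4x u + ∑ w, b w • e4xb w + ∑ u, c u • e4y u + ∑ w, d w • e4yb w := by
  ext i <;>
    simp [e4x, e4xb, e4y, e4yb, Prod.fst_sum, Prod.snd_sum, smul_eq_mul,
      Pi.single_apply, mul_ite, Finset.sum_ite_eq']

lemma clm_apply_vec {m n : ℕ} (f : P4 m n →L[ℝ] ℝ) (a c : Fin m → ℝ) (b d : Fin n → ℝ) :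
    f (a, b, c, d) = ∑ u, a u * f (e4x u) + ∑ w, b w * f (e4xb w)
      + ∑ u, c u * f (e4y u) + ∑ w, d w * f (e4yb w) := by
  rw [vec_decomp a b c d]
  simp [map_add, map_sum, map_smul, smul_eq_mul]

lemma fderiv_eval {m n : ℕ} (C : P3 m n → Fin m → ℝ) (hC : Differentiable ℝ C)
    (z v : P3 m n) (u : Fin m) :
    fderiv ℝ (fun w => C w u) z v = fderiv ℝ C z v u := by
  have h2 : HasFDerivAt (fun w => C w u)
      ((ContinuousLinearMap.proj u).comp (fderiv ℝ C z)) z :=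
    (ContinuousLinearMap.proj u :
      (Fin m → ℝ) →L[ℝ] ℝ).hasFDerivAt.comp z (hC z).hasFDerivAt
  rw [h2.fderiv]; rfl

lemma fderiv_Lc_eq {m n : ℕ} (L : P4 m n → ℝ) (C : P3 m n → Fin m → ℝ)
    (hL : Differentiable ℝ L) (hC : Differentiable ℝ C)
    (Lc : P3 m n → ℝ) (hLcdef : ∀ p : P3 m n, Lc p = L (p.1, p.2.1, C p, p.2.2))
    (z v : P3 m n) :
    fderiv ℝ Lc z v
      = fderiv ℝ L (z.1, z.2.1, C z, z.2.2) (v.1, v.2.1, fderiv ℝ C z v, v.2.2) := by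
  have hPhi : HasFDerivAt (fun w : P3 m n => (w.1, w.2.1, C w, w.2.2) : P3 m n → P4 m n)
      ((ContinuousLinearMap.fst ℝ _ _).prod
        (((ContinuousLinearMap.fst ℝ _ _).comp (ContinuousLinearMap.snd ℝ _ _)).prod
          ((fderiv ℝ C z).prod
            ((ContinuousLinearMap.snd ℝ _ _).comp (ContinuousLinearMap.snd ℝ _ _))))) z :=
    HasFDerivAt.prodMk hasFDerivAt_fst
      (HasFDerivAt.prodMk (HasFDerivAt.comp z hasFDerivAt_fst hasFDerivAt_snd)
        (HasFDerivAt.prodMk ((hC z).hasFDerivAt) (HasFDerivAt.comp z hasFDerivAt_snd hasFDerivAt_snd)))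
  have heq : Lc = L ∘ (fun w : P3 m n => (w.1, w.2.1, C w, w.2.2)) := by
    funext w; simp [hLcdef]
  have hcomp := (hL (z.1, z.2.1, C z, z.2.2)).hasFDerivAt.comp z hPhi
  rw [← heq] at hcomp
  rw [hcomp.fderiv]; rfl

lemma EL_algebra {m : ℕ} (Ayb' Axb : ℝ) (K K' B B' Ax Exb : Fin m → ℝ) (Ex : Fin m → Fin m → ℝ) :
    Ayb' + ∑ u, (K' u * B u + K u * B' u) - (Axb + ∑ u, Exb u * B u)
      - ∑ v, K v * (Ax v + ∑ u, Ex u v * B u)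
    = Ayb' - Axb + ∑ u, K u * (B' u - Ax u)
      + ∑ u, B u * (K' u - Exb u - ∑ v, K v * Ex u v) := by
  simp only [mul_add, mul_sub, sub_mul, Finset.sum_add_distrib, Finset.sum_sub_distrib,
    Finset.mul_sum]
  rw [Finset.sum_comm (f := fun v u => K v * (Ex u v * B u))]
  rw [show ∑ u, K' u * B u = ∑ u, B u * K' u from
    Finset.sum_congr rfl fun u _ => mul_comm _ _]
  rw [show ∑ u, Exb u * B u = ∑ u, B u * Exb u from
    Finset.sum_congr rfl fun u _ => mul_comm _ _]
  rw [show ∑ u, ∑ v, K v * (Ex u v * B u) = ∑ u, ∑ v, B u * (K v * Ex u v) from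
    Finset.sum_congr rfl fun u _ => Finset.sum_congr rfl fun v _ => by ring]
  abel

/-- along a curve with `dx̄/dt = ȳ` and `dx/dt = C`, the
constrained Euler–Lagrange expression for `L_c(x,x̄,ȳ) = L(x,x̄,C,ȳ)`
satisfies
`d/dt(∂L_c/∂ȳ^ū) − ∂L_c/∂x̄^ū − C^u_ū ∂L_c/∂x^u
 = d/dt(∂L/∂ȳ^ū) − ∂L/∂x̄^ū + C^u_ū (d/dt(∂L/∂y^u) − ∂L/∂x^u)
   + (∂L/∂y^u)(dC^u_ū/dt − ∂C^u/∂x̄^ū − C^v_ū ∂C^u/∂x^v)`,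
all derivatives of `L` being evaluated at `y = C`. -/
theorem constrained_EL_comparison (m n : ℕ)
    (L : P4 m n → ℝ) (C : P3 m n → Fin m → ℝ)
    (hL : ContDiff ℝ (⊤ : ℕ∞) L) (hC : ContDiff ℝ (⊤ : ℕ∞) C)
    (Lc : P3 m n → ℝ) (hLcdef : ∀ p : P3 m n, Lc p = L (p.1, p.2.1, C p, p.2.2))
    (x : ℝ → Fin m → ℝ) (xb : ℝ → Fin n → ℝ) (yb : ℝ → Fin n → ℝ)
    (hx : ContDiff ℝ 1 x) (hxb : ContDiff ℝ 1 xb) (hyb : ContDiff ℝ 1 yb)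
    (p : ℝ → P3 m n) (hp : ∀ t, p t = (x t, xb t, yb t))
    (q : ℝ → P4 m n) (hq : ∀ t, q t = (x t, xb t, C (p t), yb t))
    (hconstr : ∀ t, deriv x t = C (p t))
    (hvel : ∀ t, deriv xb t = yb t) :
    ∀ (t : ℝ) (ub : Fin n),
      deriv (fun s => fderiv ℝ Lc (p s) (e3yb ub)) t
        - fderiv ℝ Lc (p t) (e3xb ub)
        - ∑ u, Cub C (p t) u ub * fderiv ℝ Lc (p t) (e3x u)
      = deriv (fun s => fderiv ℝ L (q s) (e4yb ub)) t
        - fderiv ℝ L (q t) (e4xb ub)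
        + (∑ u, Cub C (p t) u ub *
            (deriv (fun s => fderiv ℝ L (q s) (e4y u)) t
              - fderiv ℝ L (q t) (e4x u)))
        + ∑ u, fderiv ℝ L (q t) (e4y u) *
            (deriv (fun s => Cub C (p s) u ub) t
              - fderiv ℝ (fun z => C z u) (p t) (e3xb ub)
              - ∑ v, Cub C (p t) v ub *
                  fderiv ℝ (fun z => C z u) (p t) (e3x v)) := by
  intro t ub
  have hCd : Differentiable ℝ C := hC.differentiable (by simp)
  have hLd : Differentiable ℝ L := hL.differentiable (by simp)
  have hpf : p = fun s => (x s, xb s, yb s) := funext hp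
  have hqf : q = fun s => (x s, xb s, C (p s), yb s) := funext hq
  have hp1 : ContDiff ℝ 1 p := by rw [hpf]; exact hx.prodMk (hxb.prodMk hyb)
  have hq1 : ContDiff ℝ 1 q := by
    rw [hqf]; exact hx.prodMk (hxb.prodMk (((hC.of_le (by simp)).comp hp1).prodMk hyb))
  have hp_diff : Differentiable ℝ p := hp1.differentiable one_ne_zero
  have hq_diff : Differentiable ℝ q := hq1.differentiable one_ne_zero
  have hfL : Differentiable ℝ (fderiv ℝ L) :=
    (hL.fderiv_right (m := 1) (by exact WithTop.coe_le_coe.mpr (le_top : ((1 + 1 : ℕ) : ℕ∞) ≤ ⊤))).differentiable one_ne_zero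
  have hB : ∀ e : P4 m n, Differentiable ℝ (fun s => fderiv ℝ L (q s) e) :=
    fun e => (hfL.comp hq_diff).clm_apply (differentiable_const e)
  have hCu : ∀ u : Fin m, ContDiff ℝ (⊤ : ℕ∞) (fun z => C z u) := fun u =>
    (ContinuousLinearMap.proj u :
      (Fin m → ℝ) →L[ℝ] ℝ).contDiff.comp hC
  have hK : ∀ u : Fin m, Differentiable ℝ (fun s => Cub C (p s) u ub) := by
    intro u
    have : Differentiable ℝ (fun s => fderiv ℝ (fun z => C z u) (p s) (e3yb ub)) :=
      ((((hCu u).fderiv_right (m := 1) (by exact WithTop.coe_le_coe.mpr (le_top : ((1 + 1 : ℕ) : ℕ∞) ≤ ⊤))).differentiable one_ne_zero).comp hp_diff).clm_apply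
        (differentiable_const _)
    exact this
  have hqz : ∀ s, ((p s).1, (p s).2.1, C (p s), (p s).2.2) = q s := by
    intro s; rw [hq s, hp s]
  -- pointwise formulas for fderiv Lc
  have Hyb : ∀ s, fderiv ℝ Lc (p s) (e3yb ub)
      = fderiv ℝ L (q s) (e4yb ub)
        + ∑ u, Cub C (p s) u ub * fderiv ℝ L (q s) (e4y u) := by
    intro s
    rw [fderiv_Lc_eq L C hLd hCd Lc hLcdef, hqz]
    have : ((e3yb ub : P3 m n).1, (e3yb ub : P3 m n).2.1,
        fderiv ℝ C (p s) (e3yb ub), (e3yb ub : P3 m n).2.2)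
        = (((0 : Fin m → ℝ), (0 : Fin n → ℝ),
            fderiv ℝ C (p s) (e3yb ub), Pi.single ub 1) : P4 m n) := rfl
    rw [this, clm_apply_vec]
    simp [Cub, fderiv_eval C hCd, Pi.single_apply, ite_mul, Finset.sum_ite_eq]
    all_goals ring
  have Hxb : fderiv ℝ Lc (p t) (e3xb ub)
      = fderiv ℝ L (q t) (e4xb ub)
        + ∑ u, fderiv ℝ (fun z => C z u) (p t) (e3xb ub) * fderiv ℝ L (q t) (e4y u) := by
    rw [fderiv_Lc_eq L C hLd hCd Lc hLcdef, hqz]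
    have : ((e3xb ub : P3 m n).1, (e3xb ub : P3 m n).2.1,
        fderiv ℝ C (p t) (e3xb ub), (e3xb ub : P3 m n).2.2)
        = (((0 : Fin m → ℝ), Pi.single ub 1,
            fderiv ℝ C (p t) (e3xb ub), (0 : Fin n → ℝ)) : P4 m n) := rfl
    rw [this, clm_apply_vec]
    simp [fderiv_eval C hCd, Pi.single_apply, ite_mul, Finset.sum_ite_eq]
  have Hx : ∀ v : Fin m, fderiv ℝ Lc (p t) (e3x v)
      = fderiv ℝ L (q t) (e4x v)
        + ∑ u, fderiv ℝ (fun z => C z u) (p t) (e3x v) * fderiv ℝ L (q t) (e4y u) := by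
    intro v
    rw [fderiv_Lc_eq L C hLd hCd Lc hLcdef, hqz]
    have : ((e3x v : P3 m n).1, (e3x v : P3 m n).2.1,
        fderiv ℝ C (p t) (e3x v), (e3x v : P3 m n).2.2)
        = ((Pi.single v 1, (0 : Fin n → ℝ),
            fderiv ℝ C (p t) (e3x v), (0 : Fin n → ℝ)) : P4 m n) := rfl
    rw [this, clm_apply_vec]
    simp [fderiv_eval C hCd, Pi.single_apply, ite_mul, Finset.sum_ite_eq]
    all_goals ring
  -- derivative of the constrained momentum
  have hder : deriv (fun s => fderiv ℝ Lc (p s) (e3yb ub)) t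
      = deriv (fun s => fderiv ℝ L (q s) (e4yb ub)) t
        + ∑ u, (deriv (fun s => Cub C (p s) u ub) t * fderiv ℝ L (q t) (e4y u)
            + Cub C (p t) u ub * deriv (fun s => fderiv ℝ L (q s) (e4y u)) t) := by
    have hfun : (fun s => fderiv ℝ Lc (p s) (e3yb ub))
        = fun s => fderiv ℝ L (q s) (e4yb ub)
          + ∑ u, Cub C (p s) u ub * fderiv ℝ L (q s) (e4y u) := funext Hyb
    rw [hfun]
    have h1 : HasDerivAt (fun s => fderiv ℝ L (q s) (e4yb ub))
        (deriv (fun s => fderiv ℝ L (q s) (e4yb ub)) t) t :=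
      ((hB (e4yb ub)) t).hasDerivAt
    have h2 : HasDerivAt
        (fun s => ∑ u, Cub C (p s) u ub * fderiv ℝ L (q s) (e4y u))
        (∑ u, (deriv (fun s => Cub C (p s) u ub) t * fderiv ℝ L (q t) (e4y u)
            + Cub C (p t) u ub * deriv (fun s => fderiv ℝ L (q s) (e4y u)) t)) t := by
      refine HasDerivAt.fun_sum fun u _ => ?_
      exact ((hK u t).hasDerivAt).mul ((hB (e4y u) t).hasDerivAt)
    exact (h1.add h2).deriv
  rw [hder, Hxb]
  simp only [Hx]
  exact EL_algebra (deriv (fun s => fderiv ℝ L (q s) (e4yb ub)) t)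
    (fderiv ℝ L (q t) (e4xb ub))
    (fun u => Cub C (p t) u ub)
    (fun u => deriv (fun s => Cub C (p s) u ub) t)
    (fun u => fderiv ℝ L (q t) (e4y u))
    (fun u => deriv (fun s => fderiv ℝ L (q s) (e4y u)) t)
    (fun u => fderiv ℝ L (q t) (e4x u))
    (fun u => fderiv ℝ (fun z => C z u) (p t) (e3xb ub))
    (fun u v => fderiv ℝ (fun z => C z u) (p t) (e3x v))
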